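/- Let G and H be connected graphs, each with at least two vertices, and suppose the maximum degree of H satisfies Δ(H) ≤ n(H) − 2. Let W ⊆ V(G)×V(H), let S = {x ∈ V(G) : ∃ h ∈ V(H), (x,h) ∈ W}, and for each x ∈ S let T_x = {h ∈ V(H) : (x,h) ∈ W}. Then W is a resolving set of the lexicographic product G∘H if and only if: (i) S = V(G); (ii) T_x is a locating set of H for every x ∈ V(G); (iii) whenever x and y are adjacent vertices of G with N_G[x] = N_G[y], at least one of T_x, T_y is a strictly locating set of H; (iv) whenever x and y are nonadjacent vertices of G with N_G(x) = N_G(y), at least one of T_x, T_y is a dominating set of H. -/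

import Mathlib

/-- The lexicographic product of two simple graphs. -/
def lexProd {α β : Type*} (G : SimpleGraph α) (H : SimpleGraph β) :
    SimpleGraph (α × β) where
  Adj p q := G.Adj p.1 q.1 ∨ (p.1 = q.1 ∧ H.Adj p.2 q.2)
  symm := by
    refine ⟨?_⟩
    rintro ⟨g, h⟩ ⟨g', h'⟩ (hg | ⟨rfl, hh⟩)
    · exact Or.inl hg.symm
    · exact Or.inr ⟨rfl, hh.symm⟩
  loopless := by
    refine ⟨?_⟩
    rintro ⟨g, h⟩ (hg | ⟨-, hh⟩)
    · exact G.irrefl hg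
    · exact H.irrefl hh

/-- `W` is a resolving set of `G`. -/
def IsResolvingSet {α : Type*} (G : SimpleGraph α) (W : Set α) : Prop :=
  ∀ x y : α, x ≠ y → ∃ z ∈ W, G.dist x z ≠ G.dist y z

/-- `S` is a locating set of `G`. -/
def IsLocatingSet {α : Type*} (G : SimpleGraph α) (S : Set α) : Prop :=
  ∀ u ∉ S, ∀ v ∉ S, u ≠ v → G.neighborSet u ∩ S ≠ G.neighborSet v ∩ S

/-- `S` is a strictly locating set of `G`. -/
def IsStrictlyLocatingSet {α : Type*} (G : SimpleGraph α) (S : Set α) : Prop :=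
  IsLocatingSet G S ∧ ∀ u ∉ S, G.neighborSet u ∩ S ≠ S

/-- `S` is a dominating set of `G`. -/
def IsDominatingSet {α : Type*} (G : SimpleGraph α) (S : Set α) : Prop :=
  ∀ v ∉ S, ∃ u ∈ S, G.Adj v u

/-- `u` and `v` are true twins in `G`. -/
def AreTrueTwins {α : Type*} (G : SimpleGraph α) (u v : α) : Prop :=
  G.Adj u v ∧ G.neighborSet u \ {v} = G.neighborSet v \ {u}

/-- `u` and `v` are false twins in `G`. -/
def AreFalseTwins {α : Type*} (G : SimpleGraph α) (u v : α) : Prop :=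
  u ≠ v ∧ ¬ G.Adj u v ∧ G.neighborSet u \ {v} = G.neighborSet v \ {u}

/-- The path on `n` vertices `0, 1, …, n-1` (vertex `i` represents the
vertex labelled `i+1` in `{1, …, n}`). -/
def PathG (n : ℕ) : SimpleGraph (Fin n) where
  Adj i j := (i : ℕ) + 1 = (j : ℕ) ∨ (j : ℕ) + 1 = (i : ℕ)
  symm := ⟨fun i j h => Or.symm h⟩
  loopless := ⟨fun i h => by rcases h with h | h <;> omega⟩

/-- The cycle on `n` vertices `0, 1, …, n-1` (vertex `i` represents the
vertex labelled `i+1` in `{1, …, n}`). -/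
def CycleG (n : ℕ) : SimpleGraph (Fin n) where
  Adj i j := i ≠ j ∧ (((i : ℕ) + 1) % n = (j : ℕ) ∨ ((j : ℕ) + 1) % n = (i : ℕ))
  symm := ⟨fun i j h => ⟨h.1.symm, Or.symm h.2⟩⟩
  loopless := ⟨fun i h => h.1 rfl⟩

/-- The metric dimension of `G`: the minimum cardinality of a resolving set. -/
noncomputable def metricDim {α : Type*} [Fintype α] (G : SimpleGraph α) : ℕ :=
  sInf {n | ∃ W : Finset α, W.card = n ∧ IsResolvingSet G ↑W}

/-- The set `W ⊆ Fin n` contains the vertex with underlying value `k`. -/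
def valMem {n : ℕ} (W : Set (Fin n)) (k : ℕ) : Prop :=
  ∃ x ∈ W, (x : ℕ) = k

/-!
In `G ∘ H` two vertices over different `G`-coordinates are at the `G`-distance of those
coordinates, and, as no vertex of `G` is isolated, `(x, h)` and `(x, k)` are at distance `0`, `1`
or `2` according as `h = k`, `h ~ k` or neither (`fibreDist`). So the pairs inside a fibre are
resolved exactly when every trace `T_x` is locating, and a pair `(x, h)`, `(y, h')` with `x ≠ y`
is resolved by a vertex over a third coordinate unless `x` and `y` are twins. Twins are at
distance `c = 1` (true twins) or `c = 2` (false twins), and then only a `(x, k)` with `k ∈ T_x` at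
fibre distance `≠ c` from `h`, or symmetrically over `y`, resolves the pair; asking this for
every `h` is strict location when `c = 1` and domination when `c = 2`.
-/

open SimpleGraph

section

variable {α β : Type*}

section FibreDist

variable {H : SimpleGraph β}

variable (H) in
open scoped Classical in
noncomputable def fibreDist (h k : β) : ℕ :=
  if h = k then 0 else if H.Adj h k then 1 else 2

lemma fibreDist_self (h : β) : fibreDist H h h = 0 := by
  simp [fibreDist]

lemma fibreDist_eq_zero_iff {h k : β} : fibreDist H h k = 0 ↔ h = k := by
  unfold fibreDist; split_ifs <;> simp_all

lemma fibreDist_eq_one_iff {h k : β} : fibreDist H h k = 1 ↔ H.Adj h k := by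
  unfold fibreDist; split_ifs <;> simp_all

lemma fibreDist_eq_two_iff {h k : β} : fibreDist H h k = 2 ↔ h ≠ k ∧ ¬H.Adj h k := by
  unfold fibreDist; split_ifs <;> simp_all

lemma fibreDist_eq_fibreDist_iff {u v k : β} (hu : u ≠ k) (hv : v ≠ k) :
    fibreDist H u k = fibreDist H v k ↔ (H.Adj u k ↔ H.Adj v k) := by
  unfold fibreDist; split_ifs <;> simp_all

lemma neighborSet_inter_eq_iff {T : Set β} {u v : β} :
    H.neighborSet u ∩ T = H.neighborSet v ∩ T ↔ ∀ k ∈ T, (H.Adj u k ↔ H.Adj v k) := by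
  simp only [Set.ext_iff, Set.mem_inter_iff, mem_neighborSet]
  exact ⟨fun h k hk => by simpa [hk] using h k,
    fun h k => by by_cases hk : k ∈ T <;> simp_all⟩

lemma isLocatingSet_iff_fibreDist {T : Set β} :
    IsLocatingSet H T ↔
      ∀ u v, u ≠ v → ∃ k ∈ T, fibreDist H u k ≠ fibreDist H v k := by
  have key : ∀ u ∉ T, ∀ v ∉ T, H.neighborSet u ∩ T = H.neighborSet v ∩ T ↔
      ∀ k ∈ T, fibreDist H u k = fibreDist H v k := fun u hu v hv => by
    rw [neighborSet_inter_eq_iff]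
    refine forall₂_congr fun k hk => (fibreDist_eq_fibreDist_iff ?_ ?_).symm
    exacts [(ne_of_mem_of_not_mem hk hu).symm, (ne_of_mem_of_not_mem hk hv).symm]
  constructor
  · intro hT u v huv
    by_contra! h
    have hu : u ∉ T := fun hu => huv (fibreDist_eq_zero_iff.1 (h u hu ▸ fibreDist_self u)).symm
    have hv : v ∉ T := fun hv => huv (fibreDist_eq_zero_iff.1 ((h v hv).trans (fibreDist_self v)))
    exact hT u hu v hv huv ((key u hu v hv).2 h)
  · intro h u hu v hv huv hN
    obtain ⟨k, hk, hne⟩ := h u v huv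
    exact hne ((key u hu v hv).1 hN k hk)

lemma IsLocatingSet.nonempty [Nontrivial β] {T : Set β} (hT : IsLocatingSet H T) :
    T.Nonempty := by
  obtain ⟨u, v, huv⟩ := exists_pair_ne β
  by_contra hempty
  rw [Set.not_nonempty_iff_eq_empty] at hempty
  subst hempty
  exact hT u (Set.notMem_empty u) v (Set.notMem_empty v) huv (by simp)

lemma isStrictlyLocatingSet_iff_fibreDist {T : Set β} :
    IsStrictlyLocatingSet H T ↔
      IsLocatingSet H T ∧ ∀ h, ∃ k ∈ T, fibreDist H h k ≠ 1 := by
  refine and_congr_right fun _ => ?_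
  simp only [fibreDist_eq_one_iff, Ne, Set.inter_eq_right, Set.not_subset, mem_neighborSet]
  refine ⟨fun hT h => ?_, fun hT h _ => hT h⟩
  by_cases hh : h ∈ T
  exacts [⟨h, hh, H.irrefl⟩, hT h hh]

lemma isDominatingSet_iff_fibreDist {T : Set β} :
    IsDominatingSet H T ↔ ∀ h, ∃ k ∈ T, fibreDist H h k ≠ 2 := by
  simp only [fibreDist_eq_two_iff, Ne, not_and, not_not]
  refine ⟨fun hT h => ?_, fun hT h hh => ?_⟩
  · by_cases hh : h ∈ T
    · exact ⟨h, hh, fun hne => absurd rfl hne⟩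
    · obtain ⟨k, hk, hadj⟩ := hT h hh
      exact ⟨k, hk, fun _ => hadj⟩
  · obtain ⟨k, hk, hadj⟩ := hT h
    exact ⟨k, hk, hadj (ne_of_mem_of_not_mem hk hh).symm⟩

end FibreDist

section Distances

variable {G : SimpleGraph α} {H : SimpleGraph β}

lemma lexProd_adj {p q : α × β} :
    (lexProd G H).Adj p q ↔ G.Adj p.1 q.1 ∨ (p.1 = q.1 ∧ H.Adj p.2 q.2) :=
  Iff.rfl

lemma dist_eq_two_of_adj_of_adj {V : Type*} {K : SimpleGraph V} {u v w : V} (hne : u ≠ v)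
    (hnadj : ¬K.Adj u v) (huw : K.Adj u w) (hwv : K.Adj w v) : K.dist u v = 2 := by
  have hreach : K.Reachable u v := (huw.toWalk.append hwv.toWalk).reachable
  rw [← Nat.cast_inj (R := ℕ∞), hreach.coe_dist_eq_edist, Nat.cast_ofNat, edist_eq_two_iff]
  exact ⟨hne, hnadj, w, (K.mem_commonNeighbors).2 ⟨huw, hwv.symm⟩⟩

lemma exists_walk_fst_length_le_of_lexProd {p q : α × β} (w : (lexProd G H).Walk p q) :
    ∃ w' : G.Walk p.1 q.1, w'.length ≤ w.length := by
  induction w with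
  | nil => exact ⟨.nil, le_rfl⟩
  | cons hadj _ ih =>
    obtain ⟨w', hw'⟩ := ih
    rcases lexProd_adj.1 hadj with hadj | ⟨heq, -⟩
    · exact ⟨.cons hadj w', by simpa using hw'⟩
    · exact ⟨w'.copy heq.symm rfl, by simp; omega⟩

lemma lexProd_dist_of_ne (hG : G.Connected) {x y : α} (hxy : x ≠ y) (h h' : β) :
    (lexProd G H).dist (x, h) (y, h') = G.dist x y := by
  obtain ⟨p, hp⟩ := hG.exists_walk_length_eq_dist x y
  cases p with
  | nil => exact absurd rfl hxy
  | @cons _ a _ hxa q =>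
    -- the first step of `p` may move the `H`-coordinate from `h` to `h'` directly
    let constHom : G →g lexProd G H :=
      ⟨fun a => (a, h'), fun hadj => lexProd_adj.2 (.inl hadj)⟩
    let lift : (lexProd G H).Walk (x, h) (y, h') :=
      .cons (lexProd_adj.2 (.inl hxa)) (q.map constHom)
    have hle : (lexProd G H).dist (x, h) (y, h') ≤ G.dist x y := by
      simpa [lift, ← hp] using dist_le lift
    obtain ⟨w, hw⟩ := lift.reachable.exists_walk_length_eq_dist
    obtain ⟨w', hw'⟩ := exists_walk_fst_length_le_of_lexProd w
    exact hle.antisymm ((dist_le w').trans (hw'.trans_eq hw))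

lemma lexProd_dist_same_fst {x : α} (hx : ∃ z, G.Adj x z) (h k : β) :
    (lexProd G H).dist (x, h) (x, k) = fibreDist H h k := by
  obtain ⟨z, hxz⟩ := hx
  unfold fibreDist
  split_ifs with hhk hadj
  · rw [hhk, dist_self]
  · exact dist_eq_one_iff_adj.2 (lexProd_adj.2 (.inr ⟨rfl, hadj⟩))
  · refine dist_eq_two_of_adj_of_adj (w := (z, h)) (by simpa) ?_ (lexProd_adj.2 (.inl hxz))
      (lexProd_adj.2 (.inl hxz.symm))
    rintro (hxx | ⟨-, hhk⟩)
    exacts [G.irrefl hxx, hadj hhk]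

end Distances

section Twins

variable {G : SimpleGraph α}

lemma dist_le_dist_of_neighborSet_subset_insert (hG : G.Connected) {x y a : α}
    (hsub : G.neighborSet x ⊆ insert y (G.neighborSet y)) (hax : a ≠ x) :
    G.dist y a ≤ G.dist x a := by
  obtain ⟨p, hp⟩ := hG.exists_walk_length_eq_dist x a
  cases p with
  | nil => exact absurd rfl hax
  | @cons _ w _ hxw q =>
    rw [← hp, Walk.length_cons]
    rcases hsub hxw with rfl | hyw
    exacts [(dist_le q).trans (Nat.le_succ _), dist_le (.cons hyw q)]

lemma neighborSet_subset_insert_of_forall_dist_eq {x y : α}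
    (h : ∀ a, a ≠ x → a ≠ y → G.dist x a = G.dist y a) :
    G.neighborSet x ⊆ insert y (G.neighborSet y) := by
  intro w hxw
  by_cases hwy : w = y
  · exact .inl hwy
  · refine .inr (dist_eq_one_iff_adj.1 ?_)
    rw [← h w (G.ne_of_adj hxw).symm hwy]
    exact dist_eq_one_iff_adj.2 hxw

lemma neighborSet_subset_insert_and_iff {x y : α} :
    (G.neighborSet x ⊆ insert y (G.neighborSet y) ∧
        G.neighborSet y ⊆ insert x (G.neighborSet x)) ↔
      (G.Adj x y ∧ insert x (G.neighborSet x) = insert y (G.neighborSet y)) ∨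
        (¬G.Adj x y ∧ G.neighborSet x = G.neighborSet y) := by
  by_cases hxy : G.Adj x y
  · have hx : x ∈ insert y (G.neighborSet y) := .inr hxy.symm
    have hy : y ∈ insert x (G.neighborSet x) := .inr hxy
    simp only [hxy, true_and, not_true_eq_false, false_and, or_false,
      Set.Subset.antisymm_iff, Set.insert_subset_iff, hx, hy]
  · have hx : x ∉ G.neighborSet y := fun h => hxy h.symm
    have hy : y ∉ G.neighborSet x := hxy
    simp only [hxy, false_and, not_false_eq_true, true_and, false_or,
      Set.subset_insert_iff_of_notMem hx, Set.subset_insert_iff_of_notMem hy,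
      Set.Subset.antisymm_iff]

lemma forall_dist_eq_iff (hG : G.Connected) {x y : α} :
    (∀ a, a ≠ x → a ≠ y → G.dist x a = G.dist y a) ↔
      (G.Adj x y ∧ insert x (G.neighborSet x) = insert y (G.neighborSet y)) ∨
        (¬G.Adj x y ∧ G.neighborSet x = G.neighborSet y) := by
  rw [← neighborSet_subset_insert_and_iff]
  refine ⟨fun h => ⟨neighborSet_subset_insert_of_forall_dist_eq h,
    neighborSet_subset_insert_of_forall_dist_eq fun a hay hax => (h a hax hay).symm⟩,
    fun h a hax hay => ?_⟩
  exact (dist_le_dist_of_neighborSet_subset_insert hG h.2 hay).antisymm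
    (dist_le_dist_of_neighborSet_subset_insert hG h.1 hax)

lemma dist_eq_two_of_neighborSet_eq [Nontrivial α] (hG : G.Connected) {x y : α} (hxy : x ≠ y)
    (hadj : ¬G.Adj x y) (hN : G.neighborSet x = G.neighborSet y) : G.dist x y = 2 := by
  obtain ⟨z, hxz⟩ := hG.preconnected.exists_adj_of_nontrivial x
  have hyz : G.Adj y z := by rwa [← mem_neighborSet, ← hN]
  exact dist_eq_two_of_adj_of_adj hxy hadj hxz hyz.symm

end Twins

section Resolving

def Resolves {V : Type*} (K : SimpleGraph V) (W : Set V) (p q : V) : Prop :=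
  ∃ z ∈ W, K.dist p z ≠ K.dist q z

lemma isResolvingSet_prod_iff {K : SimpleGraph (α × β)} {W : Set (α × β)} :
    IsResolvingSet K W ↔ (∀ x u v, u ≠ v → Resolves K W (x, u) (x, v)) ∧
      ∀ x y, x ≠ y → ∀ h h', Resolves K W (x, h) (y, h') := by
  refine ⟨fun hW => ⟨fun x u v huv => hW _ _ (by simpa),
    fun x y hxy h h' => hW _ _ (by simp [hxy])⟩, fun hW => ?_⟩
  rintro ⟨x, u⟩ ⟨y, v⟩ hne
  by_cases hxy : x = y
  · subst hxy
    exact hW.1 x u v (by simpa using hne)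
  · exact hW.2 x y hxy u v

variable {G : SimpleGraph α} {H : SimpleGraph β} {W : Set (α × β)}

lemma resolves_lexProd_same_fst [Nontrivial α] (hG : G.Connected) (x : α) (u v : β) :
    Resolves (lexProd G H) W (x, u) (x, v) ↔
      ∃ k ∈ {h : β | (x, h) ∈ W}, fibreDist H u k ≠ fibreDist H v k := by
  have hx := hG.preconnected.exists_adj_of_nontrivial x
  constructor
  · rintro ⟨⟨a, k⟩, hz, hne⟩
    by_cases hxa : x = a
    · subst hxa
      exact ⟨k, hz, by rwa [lexProd_dist_same_fst hx, lexProd_dist_same_fst hx] at hne⟩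
    · rw [lexProd_dist_of_ne hG hxa, lexProd_dist_of_ne hG hxa] at hne
      exact absurd rfl hne
  · rintro ⟨k, hk, hne⟩
    exact ⟨(x, k), hk, by rwa [lexProd_dist_same_fst hx, lexProd_dist_same_fst hx]⟩

lemma resolves_lexProd_of_ne [Nontrivial α] (hG : G.Connected) {x y : α} (hxy : x ≠ y)
    (h h' : β) :
    Resolves (lexProd G H) W (x, h) (y, h') ↔
      (∃ a k, (a, k) ∈ W ∧ a ≠ x ∧ a ≠ y ∧ G.dist x a ≠ G.dist y a) ∨
      (∃ k ∈ {h : β | (x, h) ∈ W}, fibreDist H h k ≠ G.dist x y) ∨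
      ∃ k ∈ {h : β | (y, h) ∈ W}, fibreDist H h' k ≠ G.dist x y := by
  have hx := hG.preconnected.exists_adj_of_nontrivial x
  have hy := hG.preconnected.exists_adj_of_nontrivial y
  constructor
  · rintro ⟨⟨a, k⟩, hz, hne⟩
    by_cases hxa : x = a
    · subst hxa
      rw [lexProd_dist_same_fst hx, lexProd_dist_of_ne hG hxy.symm, dist_comm] at hne
      exact .inr (.inl ⟨k, hz, hne⟩)
    by_cases hya : y = a
    · subst hya
      rw [lexProd_dist_same_fst hy, lexProd_dist_of_ne hG hxy] at hne
      exact .inr (.inr ⟨k, hz, Ne.symm hne⟩)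
    rw [lexProd_dist_of_ne hG hxa, lexProd_dist_of_ne hG hya] at hne
    exact .inl ⟨a, k, hz, Ne.symm hxa, Ne.symm hya, hne⟩
  · rintro (⟨a, k, hz, hax, hay, hne⟩ | ⟨k, hz, hne⟩ | ⟨k, hz, hne⟩)
    · refine ⟨(a, k), hz, ?_⟩
      rwa [lexProd_dist_of_ne hG hax.symm, lexProd_dist_of_ne hG hay.symm]
    · refine ⟨(x, k), hz, ?_⟩
      rwa [lexProd_dist_same_fst hx, lexProd_dist_of_ne hG hxy.symm, dist_comm]
    · refine ⟨(y, k), hz, ?_⟩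
      rw [lexProd_dist_same_fst hy, lexProd_dist_of_ne hG hxy]
      exact hne.symm

lemma forall_resolves_lexProd_of_ne_iff [Nontrivial α] (hG : G.Connected)
    (hW : ∀ a, ∃ k, (a, k) ∈ W) {x y : α} (hxy : x ≠ y) :
    (∀ h h', Resolves (lexProd G H) W (x, h) (y, h')) ↔
      ((∀ a, a ≠ x → a ≠ y → G.dist x a = G.dist y a) →
        (∀ h, ∃ k ∈ {h : β | (x, h) ∈ W}, fibreDist H h k ≠ G.dist x y) ∨
        ∀ h, ∃ k ∈ {h : β | (y, h) ∈ W}, fibreDist H h k ≠ G.dist x y) := by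
  rw [imp_iff_not_or]
  simp only [resolves_lexProd_of_ne hG hxy, forall_or_left, forall_or_right]
  refine or_congr_left ⟨?_, fun h => ?_⟩
  · rintro ⟨a, k, -, hax, hay, hne⟩ htw
    exact hne (htw a hax hay)
  · push Not at h
    obtain ⟨a, hax, hay, hne⟩ := h
    obtain ⟨k, hk⟩ := hW a
    exact ⟨a, k, hk, hax, hay, hne⟩

end Resolving

end

theorem stmt16_general {α β : Type*} (G : SimpleGraph α) (H : SimpleGraph β)
    (hG : G.Connected)
    [Nontrivial α] [Nontrivial β]
    (W : Set (α × β)) :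
    IsResolvingSet (lexProd G H) W ↔
      ({x : α | ∃ h : β, (x, h) ∈ W} = Set.univ ∧
       (∀ x : α, IsLocatingSet H {h : β | (x, h) ∈ W}) ∧
       (∀ x y : α, G.Adj x y →
          insert x (G.neighborSet x) = insert y (G.neighborSet y) →
          (IsStrictlyLocatingSet H {h : β | (x, h) ∈ W} ∨
           IsStrictlyLocatingSet H {h : β | (y, h) ∈ W})) ∧
       (∀ x y : α, x ≠ y → ¬ G.Adj x y →
          G.neighborSet x = G.neighborSet y →
          (IsDominatingSet H {h : β | (x, h) ∈ W} ∨
           IsDominatingSet H {h : β | (y, h) ∈ W}))) := by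
  rw [isResolvingSet_prod_iff, Set.eq_univ_iff_forall]
  simp only [resolves_lexProd_same_fst hG, ← isLocatingSet_iff_fibreDist]
  constructor
  · rintro ⟨hloc, hres⟩
    have hW : ∀ a, ∃ k, (a, k) ∈ W := fun a => (hloc a).nonempty
    have hpairs x y (hxy : x ≠ y) :=
      (forall_resolves_lexProd_of_ne_iff hG hW hxy).1 (hres x y hxy)
    refine ⟨hW, hloc, fun x y hadj hN => ?_, fun x y hxy hadj hN => ?_⟩
    · have := hpairs x y hadj.ne ((forall_dist_eq_iff hG).2 (.inl ⟨hadj, hN⟩))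
      rw [dist_eq_one_iff_adj.2 hadj] at this
      simpa only [isStrictlyLocatingSet_iff_fibreDist, hloc, true_and] using this
    · have := hpairs x y hxy ((forall_dist_eq_iff hG).2 (.inr ⟨hadj, hN⟩))
      rw [dist_eq_two_of_neighborSet_eq hG hxy hadj hN] at this
      simpa only [isDominatingSet_iff_fibreDist] using this
  · rintro ⟨hW, hloc, htrue, hfalse⟩
    refine ⟨hloc, fun x y hxy => (forall_resolves_lexProd_of_ne_iff hG hW hxy).2 fun htw => ?_⟩
    rcases (forall_dist_eq_iff hG).1 htw with ⟨hadj, hN⟩ | ⟨hadj, hN⟩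
    · rw [dist_eq_one_iff_adj.2 hadj]
      simpa only [isStrictlyLocatingSet_iff_fibreDist, hloc, true_and] using htrue x y hadj hN
    · rw [dist_eq_two_of_neighborSet_eq hG hxy hadj hN]
      simpa only [isDominatingSet_iff_fibreDist] using hfalse x y hxy hadj hN

/-- Characterization of resolving sets of the lexicographic product `G ∘ H`
when `Δ(H) ≤ n(H) - 2`. -/
theorem stmt16 {α β : Type*} [Fintype β] (G : SimpleGraph α) (H : SimpleGraph β)
    [DecidableRel H.Adj] (hG : G.Connected) (hH : H.Connected)
    [Nontrivial α] [Nontrivial β]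
    (hΔ : H.maxDegree ≤ Fintype.card β - 2) (W : Set (α × β)) :
    IsResolvingSet (lexProd G H) W ↔
      ({x : α | ∃ h : β, (x, h) ∈ W} = Set.univ ∧
       (∀ x : α, IsLocatingSet H {h : β | (x, h) ∈ W}) ∧
       (∀ x y : α, G.Adj x y →
          insert x (G.neighborSet x) = insert y (G.neighborSet y) →
          (IsStrictlyLocatingSet H {h : β | (x, h) ∈ W} ∨
           IsStrictlyLocatingSet H {h : β | (y, h) ∈ W})) ∧
       (∀ x y : α, x ≠ y → ¬ G.Adj x y →
          G.neighborSet x = G.neighborSet y →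
          (IsDominatingSet H {h : β | (x, h) ∈ W} ∨
           IsDominatingSet H {h : β | (y, h) ∈ W}))) :=
  stmt16_general G H hG W
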